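/- arXiv:2604.09131 — 7 statements merged into one kernel-verified Lean document; each statement's English description precedes it below -/
import Mathlib

section
/- Let (f, C) be a constrained multiobjective problem with f : ℝ^n → ℝ^m and feasible set C ⊆ ℝ^n, whose Pareto set PS(f, C) is non-empty, and assume (f, C) satisfies the domination property. Let K be any set with PS(f, C) ⊆ K ⊆ C. Then PS(f, C) = ND^{(f,C)}(K), i.e., the Pareto set equals the set of points of K that are not dominated by any point of K. -/
open Matrix Set

/-- `y` dominates `x` w.r.t. the vector objective `f`. -/
def Dominates {α : Type*} {m : ℕ} (f : α → Fin m → ℝ) (y x : α) : Prop :=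
  (∀ i, f y i ≤ f x i) ∧ ∃ j, f y j < f x j

/-- The Pareto set of the constrained multiobjective problem `(f, C)`. -/
def ParetoSet {α : Type*} {m : ℕ} (f : α → Fin m → ℝ) (C : Set α) : Set α :=
  {x | x ∈ C ∧ ¬ ∃ y ∈ C, Dominates f y x}

/-- Non-dominated feasible points of `S` for the problem `(f, C)`. -/
def ND {α : Type*} {m : ℕ} (f : α → Fin m → ℝ) (C S : Set α) : Set α :=
  {x | x ∈ S ∩ C ∧ ¬ ∃ y ∈ S ∩ C, Dominates f y x}

/-- The domination property for the problem `(f, C)`. -/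
def DominationProperty {α : Type*} {m : ℕ} (f : α → Fin m → ℝ) (C : Set α) : Prop :=
  ∀ x ∈ C \ ParetoSet f C, ∃ z ∈ ParetoSet f C, Dominates f z x

section

variable {α : Type*} {m : ℕ} {f : α → Fin m → ℝ} {C S : Set α}

theorem paretoSet_inter_subset_ND : ParetoSet f C ∩ S ⊆ ND f C S :=
  fun _ ⟨⟨hxC, hnd⟩, hxS⟩ =>
    ⟨⟨hxS, hxC⟩, fun ⟨y, ⟨_, hyC⟩, hyx⟩ => hnd ⟨y, hyC, hyx⟩⟩

/-- A feasible point outside the Pareto set is dominated by a Pareto point, which lies in `S`. -/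
theorem ND_subset_paretoSet (hdom : DominationProperty f C) (hS : ParetoSet f C ⊆ S) :
    ND f C S ⊆ ParetoSet f C := by
  rintro x ⟨⟨-, hxC⟩, hnd⟩
  by_contra hx
  obtain ⟨z, hz, hzx⟩ := hdom x ⟨hxC, hx⟩
  exact hnd ⟨z, ⟨hS hz, hz.1⟩, hzx⟩

end

theorem stmt_9_general {n m : ℕ} (f : (Fin n → ℝ) → Fin m → ℝ) (C K : Set (Fin n → ℝ))
    (hdom : DominationProperty f C)
    (hK1 : ParetoSet f C ⊆ K) :
    ParetoSet f C = ND f C K :=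
  subset_antisymm (fun _ hx => paretoSet_inter_subset_ND ⟨hx, hK1 hx⟩)
    (ND_subset_paretoSet hdom hK1)

theorem stmt_9 {n m : ℕ} (f : (Fin n → ℝ) → Fin m → ℝ) (C K : Set (Fin n → ℝ))
    (hne : (ParetoSet f C).Nonempty) (hdom : DominationProperty f C)
    (hK1 : ParetoSet f C ⊆ K) (hK2 : K ⊆ C) :
    ParetoSet f C = ND f C K :=
  stmt_9_general f C K hdom hK1
end

section
/- Let (f, C) be a constrained multiobjective problem with f : ℝ^n → ℝ^m and feasible set C ⊆ ℝ^n. Assume there exist y ∈ C and r > 0 such that y dominates every point of C \ B(y, r), where B(y, r) is the closed ball centered at y with radius r. Then PS(f, C) = PS(f, C ∩ B(y, r)). -/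
open Matrix Set

theorem Dominates.irrefl {α : Type*} {m : ℕ} (f : α → Fin m → ℝ) (x : α) :
    ¬ Dominates f x x :=
  fun ⟨_, _, hj⟩ => lt_irrefl _ hj

theorem Dominates.trans {α : Type*} {m : ℕ} {f : α → Fin m → ℝ} {a b c : α}
    (hab : Dominates f a b) (hbc : Dominates f b c) : Dominates f a c :=
  ⟨fun i => (hab.1 i).trans (hbc.1 i), hab.2.imp fun j hj => hj.trans_le (hbc.1 j)⟩

theorem mem_paretoSet_of_subset {α : Type*} {m : ℕ} {f : α → Fin m → ℝ} {C S : Set α}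
    {x : α} (hx : x ∈ ParetoSet f C) (hxS : x ∈ S) (hSC : S ⊆ C) : x ∈ ParetoSet f S :=
  ⟨hxS, fun ⟨z, hz, hzx⟩ => hx.2 ⟨z, hSC hz, hzx⟩⟩

theorem paretoSet_eq_inter_of_dominates {α : Type*} {m : ℕ} {f : α → Fin m → ℝ}
    {C D : Set α} {y : α} (hy : y ∈ C) (hdom : ∀ x ∈ C \ D, Dominates f y x) :
    ParetoSet f C = ParetoSet f (C ∩ D) := by
  have hyD : y ∈ D := by
    by_contra hyD
    exact Dominates.irrefl f y (hdom y ⟨hy, hyD⟩)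
  ext x
  constructor
  · intro hx
    have hxD : x ∈ D := by
      by_contra hxD
      exact hx.2 ⟨y, hy, hdom x ⟨hx.1, hxD⟩⟩
    exact mem_paretoSet_of_subset hx ⟨hx.1, hxD⟩ inter_subset_left
  · intro hx
    refine ⟨hx.1.1, fun ⟨z, hzC, hzx⟩ => ?_⟩
    by_cases hzD : z ∈ D
    · exact hx.2 ⟨z, ⟨hzC, hzD⟩, hzx⟩
    · exact hx.2 ⟨y, ⟨hy, hyD⟩, (hdom z ⟨hzC, hzD⟩).trans hzx⟩

theorem stmt_10_general {n m : ℕ} (f : EuclideanSpace ℝ (Fin n) → Fin m → ℝ)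
    (C : Set (EuclideanSpace ℝ (Fin n))) (y : EuclideanSpace ℝ (Fin n)) (r : ℝ)
    (hy : y ∈ C)
    (hdom : ∀ x ∈ C \ Metric.closedBall y r, Dominates f y x) :
    ParetoSet f C = ParetoSet f (C ∩ Metric.closedBall y r) :=
  paretoSet_eq_inter_of_dominates hy hdom

theorem stmt_10 {n m : ℕ} (f : EuclideanSpace ℝ (Fin n) → Fin m → ℝ)
    (C : Set (EuclideanSpace ℝ (Fin n))) (y : EuclideanSpace ℝ (Fin n)) (r : ℝ)
    (hy : y ∈ C) (hr : 0 < r)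
    (hdom : ∀ x ∈ C \ Metric.closedBall y r, Dominates f y x) :
    ParetoSet f C = ParetoSet f (C ∩ Metric.closedBall y r) :=
  stmt_10_general f C y r hy hdom
end

section
/- Let (f, C) be a constrained multiobjective problem with non-empty closed feasible set C ⊆ ℝ^n, where each objective is a multipeak function f_k(x) = min_{j=1,...,s_k} ((x − c_{k,j})ᵀ H_{k,j} (x − c_{k,j}) + v_{k,j}) with each H_{k,j} symmetric positive definite. Then (f, C) satisfies the domination property: for every x ∈ C that is not Pareto-optimal, there exists a Pareto-optimal z ∈ C dominating x. -/
open Matrix Set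

/-! Each multipeak objective is continuous and coercive, being a finite minimum of positive
definite quadratics, each of which is bounded below by `ε ‖x - c‖ ^ 2 + v`; hence its sublevel sets
are compact. Given a dominated `x ∈ C`, minimise `∑ i, f · i` over the compact set of feasible
points at least as good as `x`. The minimiser is Pareto-optimal, since anything dominating it would
lie in that set with a smaller sum, and it dominates `x` because some feasible point does. -/

open Filter Bornology

section Domination

variable {α : Type*} {m : ℕ} {f : α → Fin m → ℝ}

lemma Dominates.sum_lt {x y : α} (h : Dominates f y x) : ∑ i, f y i < ∑ i, f x i := by
  obtain ⟨hle, j, hj⟩ := h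
  exact Finset.sum_lt_sum (fun i _ => hle i) ⟨j, Finset.mem_univ j, hj⟩

lemma dominates_of_le_of_sum_lt {x y : α} (hle : ∀ i, f y i ≤ f x i)
    (hsum : ∑ i, f y i < ∑ i, f x i) : Dominates f y x := by
  obtain ⟨j, -, hj⟩ := Finset.exists_lt_of_sum_lt hsum
  exact ⟨hle, j, hj⟩

theorem dominationProperty_of_isCompact_sublevel [TopologicalSpace α] {C : Set α}
    (hC : IsClosed C) (hcont : ∀ i, Continuous fun x => f x i)
    (hcpt : ∀ i t, IsCompact {x | f x i ≤ t}) : DominationProperty f C := by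
  rintro x ⟨hxC, hxP⟩
  obtain ⟨y, hyC, hyx⟩ : ∃ y ∈ C, Dominates f y x := not_not.1 fun h => hxP ⟨hxC, h⟩
  obtain ⟨j, -⟩ := hyx.2
  set K := C ∩ ⋂ i, {y | f y i ≤ f x i}
  have hK : IsCompact K :=
    (hcpt j (f x j)).of_isClosed_subset
      (hC.inter (isClosed_iInter fun i => isClosed_le (hcont i) continuous_const))
      fun y hy => mem_iInter.1 hy.2 j
  have hxK : x ∈ K := ⟨hxC, mem_iInter.2 fun i => (le_rfl : f x i ≤ f x i)⟩
  obtain ⟨z, ⟨hzC, hzx⟩, hmin⟩ :=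
    hK.exists_isMinOn ⟨x, hxK⟩ (continuous_finsetSum _ fun i _ => hcont i).continuousOn
  replace hzx := mem_iInter.1 hzx
  have hyK : y ∈ K := ⟨hyC, mem_iInter.2 hyx.1⟩
  refine ⟨z, ⟨hzC, ?_⟩, dominates_of_le_of_sum_lt hzx ((hmin hyK).trans_lt hyx.sum_lt)⟩
  rintro ⟨w, hwC, hwz⟩
  have hwK : w ∈ K := ⟨hwC, mem_iInter.2 fun i => (hwz.1 i).trans (hzx i)⟩
  exact (hmin hwK).not_gt hwz.sum_lt

end Domination

lemma isCompact_sublevel_of_tendsto_cobounded {E : Type*} [PseudoMetricSpace E] [ProperSpace E]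
    {g : E → ℝ} (hg : Continuous g) (hlim : Tendsto g (cobounded E) atTop) (t : ℝ) :
    IsCompact {x | g x ≤ t} := by
  refine Metric.isCompact_of_isClosed_isBounded (isClosed_le hg continuous_const) ?_
  rw [isBounded_def]
  filter_upwards [hlim.eventually_gt_atTop t] with x hx using not_le.2 hx

section FiniteInf

variable {ι E : Type*} [Nonempty ι] {g : ι → E → ℝ}

lemma continuous_ciInf_of_fintype [Fintype ι] [TopologicalSpace E] (hg : ∀ i, Continuous (g i)) :
    Continuous fun x => ⨅ i, g i x := by
  simp_rw [← Finset.inf'_univ_eq_ciInf]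
  exact Continuous.finset_inf'_apply Finset.univ_nonempty fun i _ => hg i

lemma tendsto_ciInf_atTop [Finite ι] {l : Filter E} (hg : ∀ i, Tendsto (g i) l atTop) :
    Tendsto (fun x => ⨅ i, g i x) l atTop :=
  tendsto_atTop.2 fun b =>
    (eventually_all.2 fun i => tendsto_atTop.1 (hg i) b).mono fun _ hx => le_ciInf hx

end FiniteInf

namespace Matrix.PosDef

variable {ι : Type*} [Fintype ι] {M : Matrix ι ι ℝ}

lemma exists_pos_mul_sq_norm_le (hM : M.PosDef) :
    ∃ ε > 0, ∀ z : ι → ℝ, ε * ‖z‖ ^ 2 ≤ z ⬝ᵥ (M *ᵥ z) := by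
  set q : (ι → ℝ) → ℝ := fun z => z ⬝ᵥ (M *ᵥ z)
  have hq_smul (a : ℝ) (z : ι → ℝ) : q (a • z) = a ^ 2 * q z := by
    simp only [q, mulVec_smul, smul_dotProduct, dotProduct_smul, smul_eq_mul]
    ring
  rcases isEmpty_or_nonempty ι with hι | hι
  · exact ⟨1, one_pos, fun z => by simp [Subsingleton.elim z 0]⟩
  obtain ⟨u, hu, hmin⟩ := (isCompact_sphere (0 : ι → ℝ) 1).exists_isMinOn
    (NormedSpace.sphere_nonempty.2 zero_le_one) (by fun_prop : Continuous q).continuousOn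
  have hu0 : u ≠ 0 := ne_zero_of_mem_unit_sphere ⟨u, hu⟩
  refine ⟨q u, by simpa using hM.dotProduct_mulVec_pos hu0, fun z => ?_⟩
  rcases eq_or_ne z 0 with rfl | hz
  · simp
  have hle : q u ≤ q (‖z‖⁻¹ • z) := hmin (by simp [norm_smul, hz])
  calc q u * ‖z‖ ^ 2 ≤ q (‖z‖⁻¹ • z) * ‖z‖ ^ 2 := by gcongr
    _ = q z := by rw [hq_smul]; field_simp

lemma tendsto_quadratic_cobounded (hM : M.PosDef) (c : ι → ℝ) (v : ℝ) :
    Tendsto (fun z => (z - c) ⬝ᵥ (M *ᵥ (z - c)) + v) (cobounded _) atTop := by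
  obtain ⟨ε, hε, hle⟩ := hM.exists_pos_mul_sq_norm_le
  refine tendsto_atTop_mono (fun z => add_le_add_left (hle (z - c)) v) ?_
  simp_rw [← dist_eq_norm]
  exact tendsto_atTop_add_const_right _ v
    (((tendsto_pow_atTop two_ne_zero).comp (Metric.tendsto_dist_right_cobounded_atTop c)).const_mul_atTop hε)

end Matrix.PosDef

theorem stmt_11_general {n m : ℕ} (s : Fin m → ℕ) (hs : ∀ k, 0 < s k)
    (c : (k : Fin m) → Fin (s k) → Fin n → ℝ)
    (v : (k : Fin m) → Fin (s k) → ℝ)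
    (H : (k : Fin m) → Fin (s k) → Matrix (Fin n) (Fin n) ℝ)
    (hH : ∀ k j, (H k j).PosDef)
    (f : (Fin n → ℝ) → Fin m → ℝ)
    (hf : ∀ x k, f x k = ⨅ j, ((x - c k j) ⬝ᵥ (H k j *ᵥ (x - c k j)) + v k j))
    (C : Set (Fin n → ℝ)) (hCclosed : IsClosed C) :
    DominationProperty f C := by
  have (k : Fin m) : Nonempty (Fin (s k)) := ⟨⟨0, hs k⟩⟩
  have hcont (k : Fin m) : Continuous fun x => f x k := by
    simp_rw [hf]
    exact continuous_ciInf_of_fintype fun j => by fun_prop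
  have hlim (k : Fin m) : Tendsto (fun x => f x k) (cobounded _) atTop := by
    simp_rw [hf]
    exact tendsto_ciInf_atTop fun j => (hH k j).tendsto_quadratic_cobounded _ _
  exact dominationProperty_of_isCompact_sublevel hCclosed hcont
    fun k => isCompact_sublevel_of_tendsto_cobounded (hcont k) (hlim k)

theorem stmt_11 {n m : ℕ} (s : Fin m → ℕ) (hs : ∀ k, 0 < s k)
    (c : (k : Fin m) → Fin (s k) → Fin n → ℝ)
    (v : (k : Fin m) → Fin (s k) → ℝ)
    (H : (k : Fin m) → Fin (s k) → Matrix (Fin n) (Fin n) ℝ)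
    (hH : ∀ k j, (H k j).PosDef)
    (f : (Fin n → ℝ) → Fin m → ℝ)
    (hf : ∀ x k, f x k = ⨅ j, ((x - c k j) ⬝ᵥ (H k j *ᵥ (x - c k j)) + v k j))
    (C : Set (Fin n → ℝ)) (hCne : C.Nonempty) (hCclosed : IsClosed C) :
    DominationProperty f C :=
  stmt_11_general s hs c v H hH f hf C hCclosed
end

section
/- Consider a bi-objective multipeak problem with objectives f_a(x) = min_{i=1,...,k_a} f_{a_i}(x) and f_b(x) = min_{j=1,...,k_b} f_{b_j}(x), where f_{a_i}, f_{b_j} : ℝ^n → ℝ, and a non-empty feasible set C ⊆ ℝ^n (possibly C = ℝ^n). Then every Pareto-optimal point x* of the problem ((f_a, f_b), C) belongs to some pairwise Pareto set: PS((f_a, f_b), C) ⊆ ⋃_{i,j} PS((f_{a_i}, f_{b_j}), C). -/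
open Matrix Set

/-! A multipeak objective `⨅ i, f i` lies below each of its peaks and agrees at `x` with a peak
attaining the minimum there. Any point dominating `x` for the peaks then dominates it for the
multipeak objectives, so Pareto-optimality passes from the multipeak problem to that pair of peaks. -/

section Pareto

variable {α : Type*} {m : ℕ} {F G : α → Fin m → ℝ} {x y : α}

theorem Dominates.of_le_of_eq (hFG : ∀ z k, F z k ≤ G z k) (hx : F x = G x)
    (h : Dominates G y x) : Dominates F y x := by
  obtain ⟨hle, k, hlt⟩ := h
  exact ⟨fun i => (hFG y i).trans (hx ▸ hle i), k, (hFG y k).trans_lt (hx ▸ hlt)⟩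

theorem mem_paretoSet_of_le_of_eq {C : Set α} (hFG : ∀ z k, F z k ≤ G z k) (hx : F x = G x)
    (h : x ∈ ParetoSet F C) : x ∈ ParetoSet G C :=
  ⟨h.1, fun ⟨y, hyC, hy⟩ => h.2 ⟨y, hyC, hy.of_le_of_eq hFG hx⟩⟩

end Pareto

theorem stmt_13_general {n ka kb : ℕ} (hka : 0 < ka) (hkb : 0 < kb)
    (fa : Fin ka → (Fin n → ℝ) → ℝ) (fb : Fin kb → (Fin n → ℝ) → ℝ)
    (C : Set (Fin n → ℝ)) :
    ParetoSet (fun x => ![⨅ i, fa i x, ⨅ j, fb j x]) C ⊆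
      ⋃ i, ⋃ j, ParetoSet (fun x => ![fa i x, fb j x]) C := by
  intro x hx
  have : Nonempty (Fin ka) := ⟨⟨0, hka⟩⟩
  have : Nonempty (Fin kb) := ⟨⟨0, hkb⟩⟩
  obtain ⟨i, hi⟩ := exists_eq_ciInf_of_finite (f := fun i => fa i x)
  obtain ⟨j, hj⟩ := exists_eq_ciInf_of_finite (f := fun j => fb j x)
  refine mem_iUnion₂.2 ⟨i, j, mem_paretoSet_of_le_of_eq ?_ ?_ hx⟩
  · intro y k
    fin_cases k
    exacts [ciInf_le (Finite.bddBelow_range _) i, ciInf_le (Finite.bddBelow_range _) j]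
  · ext k
    fin_cases k
    exacts [hi.symm, hj.symm]

theorem stmt_13 {n ka kb : ℕ} (hka : 0 < ka) (hkb : 0 < kb)
    (fa : Fin ka → (Fin n → ℝ) → ℝ) (fb : Fin kb → (Fin n → ℝ) → ℝ)
    (C : Set (Fin n → ℝ)) (hC : C.Nonempty) :
    ParetoSet (fun x => ![⨅ i, fa i x, ⨅ j, fb j x]) C ⊆
      ⋃ i, ⋃ j, ParetoSet (fun x => ![fa i x, fb j x]) C :=
  stmt_13_general hka hkb fa fb C
end

section
/- Consider d multipeak inequality constraints g_u(x) = min(g_{u,1}(x), ..., g_{u,l_u}(x)), u = 1, ..., d, and for each subconstraint g_{i,j} define C_{i,j} = {x ∈ ℝ^n : g_{i,j}(x) ≤ 0}. Then the feasible set of the d constraints satisfies C = ⋂_{i=1}^d ⋃_{j=1}^{l_i} C_{i,j} = ⋃_{j_1=1}^{l_1} ⋯ ⋃_{j_d=1}^{l_d} ⋂_{i=1}^d C_{i,j_i}. Moreover, if f : ℝ^n → ℝ^m is an objective function such that the problem (f, C) satisfies the domination property, then PS(f, C) = ND^{(f,C)}( ⋃_{j_1} ⋯ ⋃_{j_d}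 PS(f, ⋂_{i=1}^d C_{i,j_i}) ): the Pareto set equals the non-dominated points of the union over all subconstraint combinations of the Pareto sets of the corresponding subproblems. -/
/-!
Since each `g_u` is a minimum of finitely many functions, `g_u x ≤ 0` iff some `g_{u,j} x ≤ 0`;
the second description of `C` is then complete distributivity of `⋂` over `⋃`. For the Pareto
set, every Pareto point of `C` lies in some piece `⋂ i, C_{i,j_i} ⊆ C` and stays Pareto there,
so it is a non-dominated point of the union of the pieces' Pareto sets. Conversely, a point of
`C` that is not Pareto is, by the domination property, dominated by a Pareto point of `C`, which
already belongs to that union.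
-/

open Matrix Set

theorem ciInf_le_iff_of_finite {ι α : Type*} [Finite ι] [Nonempty ι]
    [ConditionallyCompleteLinearOrder α] {f : ι → α} {a : α} :
    ⨅ i, f i ≤ a ↔ ∃ i, f i ≤ a := by
  obtain ⟨i₀, hi₀⟩ := exists_eq_ciInf_of_finite (f := f)
  exact ⟨fun h => ⟨i₀, hi₀ ▸ h⟩, fun ⟨i, hi⟩ => (ciInf_le (Finite.bddBelow_range f) i).trans hi⟩

section Pareto

variable {α : Type*} {m : ℕ} {f : α → Fin m → ℝ} {C : Set α}

theorem mem_paretoSet_of_subset_s15 {D : Set α} {x : α} (hDC : D ⊆ C) (hx : x ∈ ParetoSet f C)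
    (hxD : x ∈ D) : x ∈ ParetoSet f D :=
  ⟨hxD, fun ⟨y, hyD, hyx⟩ => hx.2 ⟨y, hDC hyD, hyx⟩⟩

theorem paretoSet_subset_iUnion_paretoSet {ι : Type*} {D : ι → Set α} (hC : C = ⋃ i, D i) :
    ParetoSet f C ⊆ ⋃ i, ParetoSet f (D i) := by
  intro x hx
  obtain ⟨i, hxi⟩ := mem_iUnion.mp (hC ▸ hx.1)
  exact mem_iUnion.mpr ⟨i, mem_paretoSet_of_subset_s15 (hC ▸ subset_iUnion D i) hx hxi⟩

theorem DominationProperty.nd_eq_paretoSet {S : Set α} (hdom : DominationProperty f C)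
    (hS : ParetoSet f C ⊆ S) : ND f C S = ParetoSet f C := by
  ext x
  constructor
  · rintro ⟨⟨-, hxC⟩, hnd⟩
    by_contra hx
    obtain ⟨z, hz, hzx⟩ := hdom x ⟨hxC, hx⟩
    exact hnd ⟨z, ⟨hS hz, hz.1⟩, hzx⟩
  · intro hx
    exact ⟨⟨hS hx, hx.1⟩, fun ⟨y, ⟨_, hyC⟩, hyx⟩ => hx.2 ⟨y, hyC, hyx⟩⟩

end Pareto

theorem stmt_15 {n m d : ℕ} (l : Fin d → ℕ) (hl : ∀ i, 0 < l i)
    (g : (i : Fin d) → Fin (l i) → (Fin n → ℝ) → ℝ)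
    (gm : Fin d → (Fin n → ℝ) → ℝ)
    (hgm : ∀ u x, gm u x = ⨅ j, g u j x)
    (Csub : (i : Fin d) → Fin (l i) → Set (Fin n → ℝ))
    (hCsub : ∀ i j, Csub i j = {x | g i j x ≤ 0})
    (C : Set (Fin n → ℝ)) (hC : C = {x | ∀ u, gm u x ≤ 0})
    (f : (Fin n → ℝ) → Fin m → ℝ)
    (hdom : DominationProperty f C) :
    (C = ⋂ i, ⋃ j, Csub i j) ∧
      (C = ⋃ J : (i : Fin d) → Fin (l i), ⋂ i, Csub i (J i)) ∧
      ParetoSet f C =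
        ND f C (⋃ J : (i : Fin d) → Fin (l i), ParetoSet f (⋂ i, Csub i (J i))) := by
  have : ∀ i, Nonempty (Fin (l i)) := fun i => ⟨⟨0, hl i⟩⟩
  have hInter : C = ⋂ i, ⋃ j, Csub i j := by
    ext x
    simp only [hC, hCsub, hgm, mem_ofPred_eq, mem_iInter, mem_iUnion, ciInf_le_iff_of_finite]
  have hUnion : C = ⋃ J : (i : Fin d) → Fin (l i), ⋂ i, Csub i (J i) :=
    hInter.trans iInf_iSup_eq
  exact ⟨hInter, hUnion,
    (hdom.nd_eq_paretoSet (paretoSet_subset_iUnion_paretoSet hUnion)).symm⟩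
end

section
/- Let (f, C) be a constrained multiobjective problem with f : ℝ^n → ℝ^m and non-empty feasible set C, whose Pareto set satisfies PS(f, C) = ND^{(f,C)}( ⋃_i PS^i ), where each PS^i is the Pareto set of a subproblem (f, C_i) with feasible set C_i ⊆ C, and where each subproblem has an ideal point I_i ∈ ℝ^m (i.e., for each component j, inf_{x ∈ PS^i} f_j(x) is attained/finite and (I_i)_j = inf_{x ∈ PS^i} f_j(x)). Assume (f, C) satisfies the domination property. Then for each component j, inf_{x ∈ PS(f,C)} f_j(x) = min_{z ∈ I} z_j where I = {I_i}; equivalently, the ideal point of (f, C) equals (min_{z ∈ I} z_1, ..., min_{z ∈ I} z_m). -/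
/-! Every Pareto optimal point of `(f, C)` is Pareto optimal for some subproblem, and, by the
domination property, every Pareto optimal point of a subproblem is weakly dominated by a Pareto
optimal point of `(f, C)`. Hence, in each objective, the values on `PS(f, C)` and on `⋃ i, PSⁱ`
have the same lower bounds, and the infimum over the finite union is the minimum of the
subproblem infima. -/

open Matrix Set

theorem isGLB_iff_of_subset_of_forall_exists_le {α : Type*} [Preorder α] {s t : Set α} {a : α}
    (hst : s ⊆ t) (h : ∀ y ∈ t, ∃ x ∈ s, x ≤ y) : IsGLB s a ↔ IsGLB t a := by
  refine isGLB_congr (Subset.antisymm (fun b hb y hy => ?_) (lowerBounds_mono_set hst))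
  obtain ⟨x, hx, hxy⟩ := h y hy
  exact (hb hx).trans hxy

section Pareto

variable {α : Type*} {m : ℕ} {f : α → Fin m → ℝ} {C : Set α}

theorem ND_subset (S : Set α) : ND f C S ⊆ S :=
  fun _ hx => hx.1.1

theorem paretoSet_subset : ParetoSet f C ⊆ C :=
  fun _ hx => hx.1

theorem DominationProperty.exists_mem_paretoSet_le (hdom : DominationProperty f C) {x : α}
    (hx : x ∈ C) : ∃ z ∈ ParetoSet f C, ∀ j, f z j ≤ f x j := by
  by_cases hxP : x ∈ ParetoSet f C
  · exact ⟨x, hxP, fun _ => le_rfl⟩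
  · obtain ⟨z, hzP, hzx⟩ := hdom x ⟨hx, hxP⟩
    exact ⟨z, hzP, hzx.1⟩

end Pareto

theorem stmt_17_general {n m d : ℕ} (hd : 0 < d)
    (f : (Fin n → ℝ) → Fin m → ℝ) (C : Set (Fin n → ℝ))
    (Csub : Fin d → Set (Fin n → ℝ)) (hsub : ∀ i, Csub i ⊆ C)
    (hPS : ParetoSet f C = ND f C (⋃ i, ParetoSet f (Csub i)))
    (I : Fin d → Fin m → ℝ)
    (hI : ∀ i j, IsGLB ((fun x => f x j) '' ParetoSet f (Csub i)) (I i j))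
    (hdom : DominationProperty f C) :
    ∀ j, IsGLB ((fun x => f x j) '' ParetoSet f C) (⨅ i, I i j) := by
  intro j
  have : Nonempty (Fin d) := ⟨⟨0, hd⟩⟩
  have hmin : IsGLB (⋃ i, (fun x => f x j) '' ParetoSet f (Csub i)) (⨅ i, I i j) :=
    (isGLB_iUnion_iff_of_isGLB (fun i => hI i j) _).1 (isGLB_ciInf (finite_range _).bddBelow)
  refine (isGLB_iff_of_subset_of_forall_exists_le ?_ ?_).2 hmin
  · rw [← image_iUnion, hPS]
    exact image_mono (ND_subset _)
  · simp only [mem_iUnion, mem_image]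
    rintro _ ⟨i, x, hx, rfl⟩
    obtain ⟨z, hzP, hzx⟩ := hdom.exists_mem_paretoSet_le (hsub i (paretoSet_subset hx))
    exact ⟨_, ⟨z, hzP, rfl⟩, hzx j⟩

theorem stmt_17 {n m d : ℕ} (hd : 0 < d)
    (f : (Fin n → ℝ) → Fin m → ℝ) (C : Set (Fin n → ℝ)) (hCne : C.Nonempty)
    (Csub : Fin d → Set (Fin n → ℝ)) (hsub : ∀ i, Csub i ⊆ C)
    (hPS : ParetoSet f C = ND f C (⋃ i, ParetoSet f (Csub i)))
    (I : Fin d → Fin m → ℝ)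
    (hI : ∀ i j, IsGLB ((fun x => f x j) '' ParetoSet f (Csub i)) (I i j))
    (hdom : DominationProperty f C) :
    ∀ j, IsGLB ((fun x => f x j) '' ParetoSet f C) (⨅ i, I i j) :=
  stmt_17_general hd f C Csub hsub hPS I hI hdom
end

section
/- Consider a bi-objective problem with strictly convex-quadratic objectives f_i(x) = (1/2)(x − c_i)ᵀ H_i (x − c_i) + v_i, i = 1, 2 (H_i symmetric positive definite), and a non-empty closed convex feasible set C ⊆ ℝ^n. For i = 1, 2, let p_i be the unique minimizer over C of z ↦ (z − c_i)ᵀ H_i (z − c_i). Then the nadir point of the problem equals (f_1(p_2), f_2(p_1)); that is, sup_{x ∈ PS(f,C)} f_1(x) = f_1(p_2) and sup_{x ∈ PS(f,C)} f_2(x) = f_2(p_1). -/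
open Matrix Set

/-! A unique minimiser `p` of `f₂` over `C` is Pareto optimal. A Pareto point `x` cannot have
`f₁ x > f₁ p`, since `p` would then dominate it (it is no worse in `f₂`). Hence `f₁ p` is the
largest value of `f₁` on the Pareto set, and symmetrically for `f₂`. For the quadratic objectives,
`f i` is an increasing affine function of `(z - cᵢ)ᵀ Hᵢ (z - cᵢ)`, so `pᵢ` is the unique minimiser
of `f i` over `C`. -/

section ParetoSet

variable {α : Type*} {C : Set α}

theorem mem_paretoSet_of_forall_eq {m : ℕ} {f : α → Fin m → ℝ} {p : α} {i : Fin m} (hpC : p ∈ C)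
    (huniq : ∀ y ∈ C, f y i ≤ f p i → y = p) : p ∈ ParetoSet f C := by
  refine ⟨hpC, ?_⟩
  rintro ⟨y, hyC, hle, j, hlt⟩
  rw [huniq y hyC (hle i)] at hlt
  exact lt_irrefl _ hlt

theorem le_of_mem_paretoSet_of_isMinOn {f : α → Fin 2 → ℝ} {x p : α} {i j : Fin 2} (hij : i ≠ j)
    (hx : x ∈ ParetoSet f C) (hpC : p ∈ C) (hmin : IsMinOn (fun y => f y j) C p) :
    f x i ≤ f p i := by
  by_contra! hlt
  refine hx.2 ⟨p, hpC, fun k => ?_, i, hlt⟩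
  obtain rfl | rfl : k = i ∨ k = j := by omega
  · exact hlt.le
  · exact hmin hx.1

theorem isGreatest_image_paretoSet {f : α → Fin 2 → ℝ} {p : α} {i j : Fin 2} (hij : i ≠ j)
    (hpC : p ∈ C) (hmin : IsMinOn (fun y => f y j) C p)
    (huniq : ∀ y ∈ C, f y j ≤ f p j → y = p) :
    IsGreatest ((fun x => f x i) '' ParetoSet f C) (f p i) :=
  ⟨⟨p, mem_paretoSet_of_forall_eq hpC huniq, rfl⟩,
    by rintro _ ⟨x, hx, rfl⟩; exact le_of_mem_paretoSet_of_isMinOn hij hx hpC hmin⟩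

end ParetoSet

theorem stmt_19_general {n : ℕ} (c : Fin 2 → Fin n → ℝ) (v : Fin 2 → ℝ)
    (H : Fin 2 → Matrix (Fin n) (Fin n) ℝ)
    (f : (Fin n → ℝ) → Fin 2 → ℝ)
    (hf : ∀ x i, f x i = (1 / 2) * ((x - c i) ⬝ᵥ (H i *ᵥ (x - c i))) + v i)
    (C : Set (Fin n → ℝ))
    (p : Fin 2 → Fin n → ℝ)
    (hp : ∀ i, p i ∈ C ∧ ∀ z ∈ C,
      (p i - c i) ⬝ᵥ (H i *ᵥ (p i - c i)) ≤ (z - c i) ⬝ᵥ (H i *ᵥ (z - c i)))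
    (hpuniq : ∀ i, ∀ z ∈ C,
      (z - c i) ⬝ᵥ (H i *ᵥ (z - c i)) ≤ (p i - c i) ⬝ᵥ (H i *ᵥ (p i - c i)) → z = p i) :
    IsGreatest ((fun x => f x 0) '' ParetoSet f C) (f (p 1) 0) ∧
      IsGreatest ((fun x => f x 1) '' ParetoSet f C) (f (p 0) 1) := by
  have hmin : ∀ i, IsMinOn (fun y => f y i) C (p i) := fun i z hz => by
    change f (p i) i ≤ f z i
    rw [hf, hf]
    linarith [(hp i).2 z hz]
  have huniq : ∀ i, ∀ z ∈ C, f z i ≤ f (p i) i → z = p i := fun i z hz hle =>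
    hpuniq i z hz (by rw [hf, hf] at hle; linarith)
  exact ⟨isGreatest_image_paretoSet (by decide) (hp 1).1 (hmin 1) (huniq 1),
    isGreatest_image_paretoSet (by decide) (hp 0).1 (hmin 0) (huniq 0)⟩

theorem stmt_19 {n : ℕ} (c : Fin 2 → Fin n → ℝ) (v : Fin 2 → ℝ)
    (H : Fin 2 → Matrix (Fin n) (Fin n) ℝ) (hH : ∀ i, (H i).PosDef)
    (f : (Fin n → ℝ) → Fin 2 → ℝ)
    (hf : ∀ x i, f x i = (1 / 2) * ((x - c i) ⬝ᵥ (H i *ᵥ (x - c i))) + v i)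
    (C : Set (Fin n → ℝ)) (hCne : C.Nonempty) (hCclosed : IsClosed C)
    (hCconv : Convex ℝ C)
    (p : Fin 2 → Fin n → ℝ)
    (hp : ∀ i, p i ∈ C ∧ ∀ z ∈ C,
      (p i - c i) ⬝ᵥ (H i *ᵥ (p i - c i)) ≤ (z - c i) ⬝ᵥ (H i *ᵥ (z - c i)))
    (hpuniq : ∀ i, ∀ z ∈ C,
      (z - c i) ⬝ᵥ (H i *ᵥ (z - c i)) ≤ (p i - c i) ⬝ᵥ (H i *ᵥ (p i - c i)) → z = p i) :
    IsGreatest ((fun x => f x 0) '' ParetoSet f C) (f (p 1) 0) ∧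
      IsGreatest ((fun x => f x 1) '' ParetoSet f C) (f (p 0) 1) :=
  stmt_19_general c v H f hf C p hp hpuniq
end
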